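/- arXiv:2001.06341 — 10 statements merged into one kernel-verified Lean document; each statement's English description precedes it below -/
import Mathlib

section
/- Let r ≥ 2 be an integer, and let a, b be integers with 0 ≤ a ≤ b-1 and r·(a+1) ≤ b+1. Then r·∑_{l=0}^{a} C(a,l)·(b+1)^{\underline{l}} ≤ (b+1)·b^{\underline{a}}. -/
/-!
`S a n = binomDescSum a n = ∑ₗ C(a,l) n^{\underline l}` counts the partial injections
from an `a`-set into an `n`-set. Deciding whether the last point of the domain is left out,
or where it goes, gives `S (a+1) (m+1) = S a (m+1) + (m+1) S a m`, and from this an induction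
on `a` shows `r S a n ≤ (a+r) n^{\underline a}` whenever `r (a+1) ≤ n`. For `n = b+1` the
right-hand side is at most `(b+1-a) (b+1)^{\underline a} = (b+1)^{\underline{a+1}} =
(b+1) b^{\underline a}`, since `r ≥ 2` gives `a + r ≤ b + 1 - a`.
-/

open Finset

def binomDescSum (a n : ℕ) : ℕ :=
  ∑ l ∈ range (a + 1), a.choose l * n.descFactorial l

lemma binomDescSum_succ_succ (a m : ℕ) :
    binomDescSum (a + 1) (m + 1) = binomDescSum a (m + 1) + (m + 1) * binomDescSum a m := by
  have hshift : ∀ l, (a + 1).choose (l + 1) * (m + 1).descFactorial (l + 1) =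
      a.choose (l + 1) * (m + 1).descFactorial (l + 1) +
        (m + 1) * (a.choose l * m.descFactorial l) := by
    intro l
    rw [Nat.choose_succ_succ, Nat.succ_descFactorial_succ]
    ring
  unfold binomDescSum
  rw [sum_range_succ' _ (a + 1), sum_range_succ' (fun l => a.choose l * _) a]
  simp only [hshift, sum_add_distrib, ← mul_sum]
  rw [sum_range_succ (fun l => a.choose (l + 1) * _) a]
  simp only [Nat.choose_succ_self, zero_mul, add_zero, Nat.choose_zero_right,
    Nat.descFactorial_zero, mul_one]
  ring

lemma mul_descFactorial_le_succ_mul_descFactorial {k a n : ℕ} (h : k + a ≤ n + 1) :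
    k * (n + 1).descFactorial a ≤ (n + 1) * n.descFactorial a := by
  calc k * (n + 1).descFactorial a ≤ (n + 1 - a) * (n + 1).descFactorial a := by
        gcongr; omega
    _ = (n + 1) * n.descFactorial a := by
        rw [← Nat.descFactorial_succ, Nat.succ_descFactorial_succ]

lemma mul_binomDescSum_le {r : ℕ} (hr : 2 ≤ r) {a n : ℕ} (hn : r * (a + 1) ≤ n) :
    r * binomDescSum a n ≤ (a + r) * n.descFactorial a := by
  induction a generalizing n with
  | zero => simp [binomDescSum]
  | succ a ih =>
    obtain ⟨m, rfl⟩ := Nat.exists_eq_add_one.mpr (show 0 < n by nlinarith)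
    have hm : r * (a + 1) ≤ m := by nlinarith
    calc r * binomDescSum (a + 1) (m + 1)
        = r * binomDescSum a (m + 1) + (m + 1) * (r * binomDescSum a m) := by
          rw [binomDescSum_succ_succ]; ring
      _ ≤ (a + r) * (m + 1).descFactorial a + (m + 1) * ((a + r) * m.descFactorial a) :=
          Nat.add_le_add (ih (by omega)) (Nat.mul_le_mul_left _ (ih hm))
      _ ≤ (m + 1) * m.descFactorial a + (m + 1) * ((a + r) * m.descFactorial a) := by
          have hroom : a + r + a ≤ m + 1 := by nlinarith
          exact Nat.add_le_add_right (mul_descFactorial_le_succ_mul_descFactorial hroom) _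
      _ = (a + 1 + r) * (m + 1).descFactorial (a + 1) := by
          rw [Nat.succ_descFactorial_succ]; ring

theorem stmt_1_general (r a b : ℕ) (hr : 2 ≤ r) (hrab : r * (a + 1) ≤ b + 1) :
    r * ∑ l ∈ Finset.range (a + 1), a.choose l * (b + 1).descFactorial l ≤
      (b + 1) * b.descFactorial a := by
  calc r * binomDescSum a (b + 1) ≤ (a + r) * (b + 1).descFactorial a :=
        mul_binomDescSum_le hr hrab
    _ ≤ (b + 1) * b.descFactorial a :=
        mul_descFactorial_le_succ_mul_descFactorial (by nlinarith)

theorem stmt_1 (r a b : ℕ) (hr : 2 ≤ r) (hab : a + 1 ≤ b) (hrab : r * (a + 1) ≤ b + 1) :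
    r * ∑ l ∈ Finset.range (a + 1), a.choose l * (b + 1).descFactorial l ≤
      (b + 1) * b.descFactorial a :=
  stmt_1_general r a b hr hrab
end

section
/- Let r ≥ 2 be an integer, and let a, b be integers with 1 ≤ a ≤ b-1 and r·(a+1) ≤ b+1. Then the inequality is strict: r·∑_{l=0}^{a} C(a,l)·(b+1)^{\underline{l}} < (b+1)·b^{\underline{a}}. (That is, equality in the bound r·∑_{l=0}^{a} C(a,l)·(b+1)^{\underline{l}} ≤ (b+1)·b^{\underline{a}} is possible only when a = 0.) -/
/-!
Write `S a m = ∑ l ≤ a, C(a,l) m^{\underline l}`, the number of partial injections from an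
`a`-set into an `m`-set. Removing one point of the domain gives
`S (a+1) (m+1) = S a (m+1) + (m+1) S a m`, and induction on `a` with this recursion shows that
the top term dominates: `c S a m ≤ (a+c) m^{\underline a}` as long as `2a + c ≤ m + 2`.
Since `(b+1) b^{\underline a} = (b+1-a) (b+1)^{\underline a}`, the theorem follows with `c = 3`
from `r (a+3) < 3 (b+1-a)`, which holds because `r (a+1) ≤ b+1`, `r ≥ 2` and `a ≥ 1`.
-/

open Finset

def partialInjCount (a m : ℕ) : ℕ :=
  ∑ l ∈ range (a + 1), a.choose l * m.descFactorial l

lemma partialInjCount_succ_succ (a m : ℕ) :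
    partialInjCount (a + 1) (m + 1) =
      partialInjCount a (m + 1) + (m + 1) * partialInjCount a m := by
  have hshift : partialInjCount a (m + 1) =
      ∑ l ∈ range (a + 1), a.choose (l + 1) * (m + 1).descFactorial (l + 1) + 1 := by
    have h := sum_range_succ' (fun l => a.choose l * (m + 1).descFactorial l) (a + 1)
    rw [sum_range_succ, Nat.choose_succ_self, zero_mul, add_zero] at h
    rw [partialInjCount]
    simpa only [Nat.choose_zero_right, Nat.descFactorial_zero, mul_one] using h
  have hpeel : ∑ l ∈ range (a + 1), a.choose l * (m + 1).descFactorial (l + 1) =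
      (m + 1) * partialInjCount a m := by
    rw [partialInjCount, mul_sum]
    refine sum_congr rfl fun l _ => ?_
    rw [Nat.succ_descFactorial_succ]; ring
  rw [partialInjCount, sum_range_succ', hshift]
  simp only [Nat.choose_succ_succ', add_mul, sum_add_distrib, hpeel, Nat.choose_zero_right,
    Nat.descFactorial_zero]
  ring

lemma mul_partialInjCount_le {c a m : ℕ} (h : 2 * a + c ≤ m + 2) :
    c * partialInjCount a m ≤ (a + c) * m.descFactorial a := by
  induction a generalizing m with
  | zero => simp [partialInjCount]
  | succ a ih =>
    rcases m with _ | k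
    · obtain rfl : c = 0 := by omega
      simp
    have hfac : (a + c) * (k + 1).descFactorial a ≤ (k + 1).descFactorial (a + 1) := by
      rw [Nat.descFactorial_succ]
      exact Nat.mul_le_mul_right _ (by omega)
    calc c * partialInjCount (a + 1) (k + 1)
        = c * partialInjCount a (k + 1) + (k + 1) * (c * partialInjCount a k) := by
          rw [partialInjCount_succ_succ]; ring
      _ ≤ (a + c) * (k + 1).descFactorial a + (k + 1) * ((a + c) * k.descFactorial a) :=
          Nat.add_le_add (ih (by omega)) (Nat.mul_le_mul_left _ (ih (by omega)))
      _ = (a + c) * (k + 1).descFactorial a + (a + c) * (k + 1).descFactorial (a + 1) := by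
          rw [Nat.succ_descFactorial_succ]; ring
      _ ≤ (k + 1).descFactorial (a + 1) + (a + c) * (k + 1).descFactorial (a + 1) :=
          Nat.add_le_add_right hfac _
      _ = (a + 1 + c) * (k + 1).descFactorial (a + 1) := by ring

theorem stmt_2_general (r a b : ℕ) (hr : 2 ≤ r) (ha : 1 ≤ a)
    (hrab : r * (a + 1) ≤ b + 1) :
    r * ∑ l ∈ Finset.range (a + 1), a.choose l * (b + 1).descFactorial l <
      (b + 1) * b.descFactorial a := by
  have hsum : 3 * partialInjCount a (b + 1) ≤ (a + 3) * (b + 1).descFactorial a :=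
    mul_partialInjCount_le (by nlinarith)
  have hpos : 0 < (b + 1).descFactorial a := Nat.descFactorial_pos.mpr (by nlinarith)
  have hcoef : r * (a + 3) < 3 * (b + 1 - a) := by
    have : a ≤ b + 1 := by nlinarith
    zify [this] at hrab ⊢; nlinarith
  rw [← Nat.succ_descFactorial_succ, Nat.descFactorial_succ]
  change r * partialInjCount a (b + 1) < _
  nlinarith

theorem stmt_2 (r a b : ℕ) (hr : 2 ≤ r) (ha : 1 ≤ a) (hab : a + 1 ≤ b)
    (hrab : r * (a + 1) ≤ b + 1) :
    r * ∑ l ∈ Finset.range (a + 1), a.choose l * (b + 1).descFactorial l <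
      (b + 1) * b.descFactorial a :=
  stmt_2_general r a b hr ha hrab
end

section
/- Let r ≥ 2 be an integer and let m, n be natural numbers with 3 < m and r·m ≤ n+1. Then r·∑_{i=2}^{m} C(m,i)·(n-1)^{\underline{m-i}} < C(m,2)·(n-1)^{\underline{m-1}}. -/
/-!
Write `a i = C(m,i) · d^{\underline{m-i}}` with `d = n - 1`. For `i ≥ 2` and `2m ≤ d + 2` the ratio
`a (i+1) / a i = (m-i) / ((i+1)(d-m+i+1))` is at most `1/3`, so the sum is below `3/2 · a 2`, while
the right-hand side is `(d - m + 2) · a 2`; the hypothesis `r m ≤ n + 1` with `m ≥ 4` gives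
`3 r < 2 (d - m + 2)`.
-/

lemma succ_mul_choose_mul_descFactorial_le (m d i : ℕ) (h : 2 * (m - i) ≤ d + 1) :
    (i + 1) * (m.choose (i + 1) * d.descFactorial (m - (i + 1))) ≤
      m.choose i * d.descFactorial (m - i) := by
  rcases le_or_gt m i with hmi | hmi
  · simp [Nat.choose_eq_zero_of_lt (Nat.lt_succ_of_le hmi)]
  obtain ⟨k, hk, hk'⟩ : ∃ k, m - (i + 1) = k ∧ m - i = k + 1 := ⟨_, rfl, by omega⟩
  rw [hk, hk', Nat.descFactorial_succ]
  calc (i + 1) * (m.choose (i + 1) * d.descFactorial k)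
      = m.choose i * (m - i) * d.descFactorial k := by
        rw [← Nat.choose_succ_right_eq]; ring
    _ ≤ m.choose i * (d - k) * d.descFactorial k :=
        Nat.mul_le_mul_right _ (Nat.mul_le_mul_left _ (by omega))
    _ = m.choose i * ((d - k) * d.descFactorial k) := by ring

lemma two_mul_sum_Icc_add_le (f : ℕ → ℕ) {k : ℕ} (hf : ∀ i ≥ k, 3 * f (i + 1) ≤ f i)
    {N : ℕ} (hN : k ≤ N) : 2 * ∑ i ∈ Finset.Icc k N, f i + f N ≤ 3 * f k := by
  induction N, hN using Nat.le_induction with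
  | base => simp only [Finset.Icc_self, Finset.sum_singleton]; omega
  | succ N hN ih =>
    rw [Finset.sum_Icc_succ_top (by omega)]
    have := hf N hN
    omega

theorem stmt_3 (r m n : ℕ) (hr : 2 ≤ r) (hm : 3 < m) (hmn : r * m ≤ n + 1) :
    r * ∑ i ∈ Finset.Icc 2 m, m.choose i * (n - 1).descFactorial (m - i) <
      m.choose 2 * (n - 1).descFactorial (m - 1) := by
  set d := n - 1 with hd
  set a : ℕ → ℕ := fun i => m.choose i * d.descFactorial (m - i)
  have h2m : 2 * m ≤ r * m := Nat.mul_le_mul_right m hr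
  have hratio : ∀ i ≥ 2, 3 * a (i + 1) ≤ a i := fun i hi =>
    (Nat.mul_le_mul_right _ (by omega)).trans
      (succ_mul_choose_mul_descFactorial_le m d i (by omega))
  have hsum : 2 * ∑ i ∈ Finset.Icc 2 m, a i ≤ 3 * a 2 :=
    (Nat.le_add_right _ _).trans (two_mul_sum_Icc_add_le a hratio (by omega))
  have hrhs : m.choose 2 * d.descFactorial (m - 1) = (d - (m - 2)) * a 2 := by
    rw [show m - 1 = m - 2 + 1 by omega, Nat.descFactorial_succ]; ring
  have ha2 : 0 < a 2 :=
    Nat.mul_pos (Nat.choose_pos (by omega)) (Nat.descFactorial_pos.mpr (by omega))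
  have hr' : 3 * r < 2 * (d - (m - 2)) := by
    have : r * 4 ≤ r * m := Nat.mul_le_mul_left r hm
    omega
  rw [hrhs]
  refine Nat.lt_of_mul_lt_mul_left (a := 2) ?_
  calc 2 * (r * ∑ i ∈ Finset.Icc 2 m, a i) = r * (2 * ∑ i ∈ Finset.Icc 2 m, a i) := by ring
    _ ≤ r * (3 * a 2) := Nat.mul_le_mul_left r hsum
    _ = 3 * r * a 2 := by ring
    _ < 2 * (d - (m - 2)) * a 2 := Nat.mul_lt_mul_of_pos_right hr' ha2
    _ = 2 * ((d - (m - 2)) * a 2) := by ring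
end

section
/- Let a, b be natural numbers with 2 < a and 2a ≤ b. Then ∑_{l=0}^{a} C(a,l)·(b+1)^{\underline{l}} < (a+1)·b^{\underline{a}}. -/
/-!
Write `t l = C(a,l) (b+1)^{\underline l}`. Since `t (l+1) / t l = (a-l)(b+1-l)/(l+1)`, the terms at
least double up to index `a-1`, so the whole sum is at most `2 t (a-1) + t a`. Both of these and
`b^{\underline a}` are multiples of `b^{\underline{a-2}}`, which reduces the claim to a cubic
polynomial inequality in `a` and `b` that holds once `a ≥ 3` and `b ≥ 2a`.
-/

open Finset

theorem Finset.sum_range_succ_le_two_mul_of_two_mul_le {R : Type*} [Semiring R] [PartialOrder R]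
    [IsOrderedAddMonoid R] (f : ℕ → R) (n : ℕ) (h₀ : 0 ≤ f 0)
    (h : ∀ i < n, 2 * f i ≤ f (i + 1)) :
    ∑ i ∈ range (n + 1), f i ≤ 2 * f n := by
  induction n with
  | zero => simpa [two_mul] using le_add_of_nonneg_right h₀
  | succ n ih =>
    rw [sum_range_succ]
    calc ∑ i ∈ range (n + 1), f i + f (n + 1)
        ≤ 2 * f n + f (n + 1) := add_le_add_left (ih fun i hi => h i (by omega)) _
      _ ≤ f (n + 1) + f (n + 1) := add_le_add_left (h n (by omega)) _
      _ = 2 * f (n + 1) := (two_mul _).symm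

namespace Nat

theorem choose_mul_descFactorial_succ_mul (a n l : ℕ) :
    a.choose (l + 1) * n.descFactorial (l + 1) * (l + 1) =
      a.choose l * n.descFactorial l * ((a - l) * (n - l)) := by
  rw [descFactorial_succ, mul_right_comm, choose_succ_right_eq]
  ring

theorem two_mul_choose_mul_descFactorial_le {a b l : ℕ} (hl : l + 2 ≤ a) (hb : 2 * l ≤ b) :
    2 * (a.choose l * (b + 1).descFactorial l) ≤
      a.choose (l + 1) * (b + 1).descFactorial (l + 1) := by
  refine Nat.le_of_mul_le_mul_right ?_ l.succ_pos
  rw [choose_mul_descFactorial_succ_mul]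
  calc 2 * (a.choose l * (b + 1).descFactorial l) * (l + 1)
      = a.choose l * (b + 1).descFactorial l * (2 * (l + 1)) := by ring
    _ ≤ a.choose l * (b + 1).descFactorial l * ((a - l) * (b + 1 - l)) :=
      Nat.mul_le_mul_left _ (Nat.mul_le_mul (by omega) (by omega))

theorem two_mul_choose_mul_descFactorial_add_lt {k b : ℕ} (hk : 1 ≤ k) (hb : 2 * k + 4 ≤ b) :
    2 * ((k + 2).choose (k + 1) * (b + 1).descFactorial (k + 1)) +
        (k + 2).choose (k + 2) * (b + 1).descFactorial (k + 2) <
      (k + 3) * b.descFactorial (k + 2) := by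
  obtain ⟨c, rfl⟩ : ∃ c, b = 2 * k + 4 + c := ⟨b - (2 * k + 4), by omega⟩
  have hD : 0 < (2 * k + 4 + c).descFactorial k := descFactorial_pos.mpr (by omega)
  simp only [succ_descFactorial_succ, descFactorial_succ, choose_self, choose_succ_self_right,
    show 2 * k + 4 + c - k = k + 4 + c by omega, show 2 * k + 4 + c - (k + 1) = k + 3 + c by omega]
  have key : (2 * k + 5 + c) * (2 * (k + 2) + (k + 4 + c)) <
      (k + 3) * ((k + 3 + c) * (k + 4 + c)) := by
    nlinarith [mul_le_mul' hk hk, Nat.zero_le (k * c), Nat.zero_le (c * c)]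
  calc _ = (2 * k + 5 + c) * (2 * (k + 2) + (k + 4 + c)) * (2 * k + 4 + c).descFactorial k := by
        ring
    _ < (k + 3) * ((k + 3 + c) * (k + 4 + c)) * (2 * k + 4 + c).descFactorial k :=
      Nat.mul_lt_mul_of_pos_right key hD
    _ = _ := by ring

end Nat

theorem stmt_4 (a b : ℕ) (ha : 2 < a) (hab : 2 * a ≤ b) :
    ∑ l ∈ Finset.range (a + 1), a.choose l * (b + 1).descFactorial l <
      (a + 1) * b.descFactorial a := by
  obtain ⟨k, rfl⟩ : ∃ k, a = k + 2 := ⟨a - 2, by omega⟩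
  rw [sum_range_succ]
  calc ∑ l ∈ range (k + 2), (k + 2).choose l * (b + 1).descFactorial l +
        (k + 2).choose (k + 2) * (b + 1).descFactorial (k + 2)
      ≤ 2 * ((k + 2).choose (k + 1) * (b + 1).descFactorial (k + 1)) +
        (k + 2).choose (k + 2) * (b + 1).descFactorial (k + 2) :=
        add_le_add_left (sum_range_succ_le_two_mul_of_two_mul_le _ (k + 1) (Nat.zero_le _)
          fun l hl => Nat.two_mul_choose_mul_descFactorial_le (l := l) (by omega) (by omega)) _
    _ < (k + 2 + 1) * b.descFactorial (k + 2) :=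
        Nat.two_mul_choose_mul_descFactorial_add_lt (by omega) (by omega)
end

section
/- Let a, b be natural numbers with 2 < a and 2a ≤ b. Then C(a,2)·(b+1)^{\underline{a-2}} < b^{\underline{a}}. -/
/-! Writing `b = c + a`, the factor `b^{\underline{a-3}}` is common to both sides, since
`b^{\underline a} = (c+3)(c+2)(c+1) · b^{\underline{a-3}}` and
`(b+1)^{\underline{a-2}} = (b+1) · b^{\underline{a-3}}`. What remains is the cubic inequality
`C(a,2)(c+a+1) < (c+3)(c+2)(c+1)`, which for `a ≤ c` follows from `a(a-1) ≤ (c+2)(c+1)` and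
`c+a+1 < 2(c+3)`. -/

namespace Nat

theorem choose_two_mul_lt_descFactorial_three {a c : ℕ} (h : a ≤ c) :
    a.choose 2 * (c + a + 1) < (c + 3).descFactorial 3 := by
  have hchoose : 2 * a.choose 2 ≤ (c + 2).descFactorial 2 :=
    calc 2 * a.choose 2 = a.descFactorial 2 := (descFactorial_eq_factorial_mul_choose a 2).symm
      _ ≤ (c + 2).descFactorial 2 := descFactorial_le 2 (by omega)
  have hpos : 0 < (c + 2).descFactorial 2 := descFactorial_pos.mpr (by omega)
  have hdesc : (c + 3).descFactorial 3 = (c + 3) * (c + 2).descFactorial 2 :=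
    succ_descFactorial_succ (c + 2) 2
  suffices 2 * a.choose 2 * (c + a + 1) < 2 * (c + 3) * (c + 2).descFactorial 2 by
    rw [hdesc]; linarith
  calc 2 * a.choose 2 * (c + a + 1)
      ≤ (c + 2).descFactorial 2 * (c + a + 1) := Nat.mul_le_mul_right _ hchoose
    _ < (c + 2).descFactorial 2 * (2 * (c + 3)) := Nat.mul_lt_mul_of_pos_left (by omega) hpos
    _ = 2 * (c + 3) * (c + 2).descFactorial 2 := Nat.mul_comm _ _

end Nat

theorem stmt_5 (a b : ℕ) (ha : 2 < a) (hab : 2 * a ≤ b) :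
    a.choose 2 * (b + 1).descFactorial (a - 2) < b.descFactorial a := by
  obtain ⟨c, rfl⟩ : ∃ c, b = c + a := ⟨b - a, by omega⟩
  have hsucc :
      (c + a + 1).descFactorial (a - 2) = (c + a + 1) * (c + a).descFactorial (a - 3) := by
    rw [show a - 2 = a - 3 + 1 by omega, Nat.succ_descFactorial_succ]
  have hsplit :
      (c + a).descFactorial a = (c + 3).descFactorial 3 * (c + a).descFactorial (a - 3) := by
    rw [← Nat.descFactorial_mul_descFactorial (show a - 3 ≤ a by omega),
      show c + a - (a - 3) = c + 3 by omega, show a - (a - 3) = 3 by omega]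
  have hpos : 0 < (c + a).descFactorial (a - 3) := Nat.descFactorial_pos.mpr (by omega)
  rw [hsucc, hsplit, ← Nat.mul_assoc]
  exact Nat.mul_lt_mul_of_pos_right (Nat.choose_two_mul_lt_descFactorial_three (by omega)) hpos
end

section
/- Let a, b be natural numbers with 2 < a and 2a ≤ b. Then (b+1)^{\underline{a}} + a·(b+1)^{\underline{a-1}} + a·(b+1) + 1 < 4·b^{\underline{a}}. -/
/-!
Pascal's rule for falling factorials, `x^(a) + a x^(a-1) = (x+1)^(a)`, merges the first two
terms into `(b+2)^(a)`. Writing `G = b^(a-2)`, we have `(b+2)^(a) = (b+2)(b+1) G` and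
`4 b^(a) = 4 (b-a+2)(b-a+1) G ≥ (b+2)(b+4) G` once `2a ≤ b`, leaving a margin of `3(b+2) G`,
which exceeds `a(b+1) + 1` because `G ≥ b-a+3 ≥ a`.
-/

namespace Nat

theorem descFactorial_succ_add_succ_mul_descFactorial (n k : ℕ) :
    n.descFactorial (k + 1) + (k + 1) * n.descFactorial k = (n + 1).descFactorial (k + 1) := by
  rw [descFactorial_succ, succ_descFactorial_succ, ← add_mul]
  rcases le_or_gt k n with hkn | hnk
  · congr 1
    omega
  · simp [descFactorial_eq_zero_iff_lt.mpr hnk]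

theorem add_two_descFactorial_add_le {n k : ℕ} (h : 2 * (k + 2) ≤ n) :
    (n + 2).descFactorial (k + 2) + 3 * (n + 2) * n.descFactorial k
      ≤ 4 * n.descFactorial (k + 2) := by
  rw [succ_descFactorial_succ, succ_descFactorial_succ, descFactorial_succ, descFactorial_succ]
  have hprod : (n + 2) * (n + 4) ≤ (2 * (n - (k + 1))) * (2 * (n - k)) :=
    Nat.mul_le_mul (by omega) (by omega)
  calc (n + 2) * ((n + 1) * n.descFactorial k) + 3 * (n + 2) * n.descFactorial k
      = (n + 2) * (n + 4) * n.descFactorial k := by ring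
    _ ≤ (2 * (n - (k + 1))) * (2 * (n - k)) * n.descFactorial k :=
      Nat.mul_le_mul_right _ hprod
    _ = 4 * ((n - (k + 1)) * ((n - k) * n.descFactorial k)) := by ring

theorem sub_add_one_le_descFactorial (n : ℕ) {k : ℕ} (hk : k ≠ 0) :
    n + 1 - k ≤ n.descFactorial k :=
  (Nat.le_self_pow hk _).trans (pow_sub_le_descFactorial n k)

end Nat

theorem stmt_6 (a b : ℕ) (ha : 2 < a) (hab : 2 * a ≤ b) :
    (b + 1).descFactorial a + a * (b + 1).descFactorial (a - 1) + a * (b + 1) + 1 <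
      4 * b.descFactorial a := by
  obtain ⟨k, rfl⟩ : ∃ k, a = k + 2 := ⟨a - 2, by omega⟩
  have hpascal := Nat.descFactorial_succ_add_succ_mul_descFactorial (b + 1) (k + 1)
  have hbound := Nat.add_two_descFactorial_add_le hab
  have hG : k + 2 ≤ b.descFactorial k :=
    (show k + 2 ≤ b + 1 - k by omega).trans (Nat.sub_add_one_le_descFactorial b (by omega))
  rw [show k + 2 - 1 = k + 1 by omega, hpascal]
  nlinarith
end

section
/- Let a, b be integers with 0 ≤ a ≤ b-1 and 3a ≤ 2b. Then ∑_{l=0}^{a} C(a,l)·(b+1)^{\underline{l}} < (b+1)·b^{\underline{a}}. -/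
/-!
Put `n = b + 1`, `D = n^{\underline a}` and `m = n + 1 - a`. Since
`n^{\underline a} = n^{\underline l} (n - l)^{\underline{a - l}}` and every factor of the second
falling factorial is at least `m`, we get `n^{\underline l} m^{a - l} ≤ D`; summing against
`C(a, l) m^l` gives `(∑ C(a,l) n^{\underline l}) m^a ≤ D (m + 1)^a`. The right-hand side equals
`(m - 1) D`, so it remains to see `(1 + 1/m)^a < m - 1`, which follows from
`(1 + 1/m)^a ≤ ((1 + 1/m)^m)^2 ≤ e^2 < 8` for `m ≥ 9` and by computation for `3 ≤ m ≤ 8`.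
-/

namespace Nat

theorem descFactorial_mul_pow_le_descFactorial (n : ℕ) {l a : ℕ} (hla : l ≤ a) :
    n.descFactorial l * (n + 1 - a) ^ (a - l) ≤ n.descFactorial a := by
  rcases le_or_gt l n with hln | hnl
  · rw [← descFactorial_mul_descFactorial hla, mul_comm]
    gcongr
    calc (n + 1 - a) ^ (a - l) = (n - l + 1 - (a - l)) ^ (a - l) := by congr 1; omega
      _ ≤ (n - l).descFactorial (a - l) := pow_sub_le_descFactorial _ _
  · simp [descFactorial_of_lt hnl]

theorem sum_choose_mul_descFactorial_mul_pow_le (n a : ℕ) :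
    (∑ l ∈ Finset.range (a + 1), a.choose l * n.descFactorial l) * (n + 1 - a) ^ a ≤
      n.descFactorial a * (n + 1 - a + 1) ^ a := by
  set m := n + 1 - a
  rw [add_pow, Finset.sum_mul, Finset.mul_sum]
  refine Finset.sum_le_sum fun l hl => ?_
  have hla : l ≤ a := Nat.lt_succ_iff.mp (Finset.mem_range.mp hl)
  calc a.choose l * n.descFactorial l * m ^ a
      = a.choose l * m ^ l * (n.descFactorial l * m ^ (a - l)) := by
        rw [← Nat.add_sub_of_le hla, pow_add, Nat.add_sub_cancel_left]; ring
    _ ≤ a.choose l * m ^ l * n.descFactorial a :=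
        Nat.mul_le_mul_left _ (descFactorial_mul_pow_le_descFactorial n hla)
    _ = n.descFactorial a * (m ^ l * 1 ^ (a - l) * a.choose l) := by ring

end Nat

theorem one_add_inv_pow_lt_eight {m a : ℕ} (ha : a ≤ 2 * m) : (1 + (m : ℝ)⁻¹) ^ a < 8 :=
  calc (1 + (m : ℝ)⁻¹) ^ a ≤ (1 + (m : ℝ)⁻¹) ^ (2 * m) :=
        pow_le_pow_right₀ (le_add_of_nonneg_right (by positivity)) ha
    _ = ((1 + (m : ℝ)⁻¹) ^ m) ^ 2 := by rw [← pow_mul, mul_comm]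
    _ ≤ Real.exp 1 ^ 2 := by gcongr; exact Real.one_add_inv_pow_le_exp
    _ < 8 := by nlinarith [Real.exp_one_lt_d9, Real.exp_pos 1]

theorem add_one_pow_lt_sub_one_mul_pow {m a : ℕ} (hm : 3 ≤ m) (ha : a + 4 ≤ 2 * m) :
    (m + 1) ^ a < (m - 1) * m ^ a := by
  rcases lt_or_ge m 9 with hm9 | hm9
  · have ha' : a ≤ 2 * m - 4 := by omega
    interval_cases m <;> interval_cases a <;> norm_num
  · have hm0 : (0 : ℝ) < m := by positivity
    have hm9' : (9 : ℝ) ≤ m := by exact_mod_cast hm9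
    have key : ((m : ℝ) + 1) ^ a < ((m : ℝ) - 1) * (m : ℝ) ^ a :=
      calc ((m : ℝ) + 1) ^ a = (1 + (m : ℝ)⁻¹) ^ a * (m : ℝ) ^ a := by
            rw [← mul_pow, add_mul, inv_mul_cancel₀ hm0.ne', one_mul, add_comm]
        _ < 8 * (m : ℝ) ^ a := by gcongr; exact one_add_inv_pow_lt_eight (by omega)
        _ ≤ ((m : ℝ) - 1) * (m : ℝ) ^ a := by gcongr; linarith
    rw [← Nat.cast_pred (by omega)] at key
    exact_mod_cast key

theorem stmt_7 (a b : ℕ) (hab : a + 1 ≤ b) (h3 : 3 * a ≤ 2 * b) :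
    ∑ l ∈ Finset.range (a + 1), a.choose l * (b + 1).descFactorial l <
      (b + 1) * b.descFactorial a := by
  set m := b + 1 + 1 - a
  have hsum := Nat.sum_choose_mul_descFactorial_mul_pow_le (b + 1) a
  have hcore : (m + 1) ^ a < (m - 1) * m ^ a := add_one_pow_lt_sub_one_mul_pow (by omega) (by omega)
  have hD : 0 < (b + 1).descFactorial a := Nat.descFactorial_pos.mpr (by omega)
  have hrhs : (b + 1) * b.descFactorial a = (m - 1) * (b + 1).descFactorial a := by
    rw [← Nat.succ_descFactorial]; congr 1; omega
  rw [hrhs]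
  refine Nat.lt_of_mul_lt_mul_right (a := m ^ a) ?_
  calc _ ≤ (b + 1).descFactorial a * (m + 1) ^ a := hsum
    _ < (b + 1).descFactorial a * ((m - 1) * m ^ a) := Nat.mul_lt_mul_of_pos_left hcore hD
    _ = (m - 1) * (b + 1).descFactorial a * m ^ a := by ring
end

section
/- Let m, n be natural numbers with 3 < m and 3m ≤ 2n. Then ∑_{i=2}^{m} C(m,i)·(n-1)^{\underline{m-i}} < C(m,2)·(n-1)^{\underline{m-1}}. -/
/-!
Write `t i = C(m,i) · (n-1)^{\underline{m-i}}`. Consecutive terms satisfy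
`(i+1)(n-m+i) · t (i+1) = (m-i) · t i`, and `3m ≤ 2n` makes this ratio at most `2/3` for `i ≥ 2`.
Comparing with a geometric series, the left-hand side is at most `3 · t 2 - 2 · t m`, and
`t m = 1` makes this strictly less than `3 · t 2`, while the right-hand
side is `(n-m+1) · t 2` with `n - m + 1 ≥ 3`.
-/

def chooseDescTerm (m N i : ℕ) : ℕ := m.choose i * N.descFactorial (m - i)

lemma chooseDescTerm_self (m N : ℕ) : chooseDescTerm m N m = 1 := by
  simp [chooseDescTerm]

lemma succ_mul_sub_mul_chooseDescTerm_succ (m N i : ℕ) :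
    (i + 1) * (N - (m - i - 1)) * chooseDescTerm m N (i + 1) =
      (m - i) * chooseDescTerm m N i := by
  rcases lt_or_ge i m with hi | hi
  · obtain ⟨k, hk⟩ : ∃ k, m - i = k + 1 := ⟨m - i - 1, by omega⟩
    have hk' : m - (i + 1) = k := by omega
    have hchoose : m.choose (i + 1) * (i + 1) = m.choose i * (m - i) :=
      Nat.choose_succ_right_eq m i
    simp only [chooseDescTerm, hk, hk', Nat.add_sub_cancel, Nat.descFactorial_succ]
    rw [← hk, show (i + 1) * (N - k) * (m.choose (i + 1) * N.descFactorial k) =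
      m.choose (i + 1) * (i + 1) * ((N - k) * N.descFactorial k) by ring, hchoose]
    ring
  · simp [chooseDescTerm, Nat.choose_eq_zero_of_lt (Nat.lt_succ_of_le hi), Nat.sub_eq_zero_of_le hi]

lemma mul_chooseDescTerm_succ_le {m N i p q : ℕ} (hpos : 0 < N - (m - i - 1))
    (hratio : q * (m - i) ≤ p * ((i + 1) * (N - (m - i - 1)))) :
    q * chooseDescTerm m N (i + 1) ≤ p * chooseDescTerm m N i := by
  have hc : 0 < (i + 1) * (N - (m - i - 1)) := Nat.mul_pos i.succ_pos hpos
  refine Nat.le_of_mul_le_mul_left ?_ hc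
  calc (i + 1) * (N - (m - i - 1)) * (q * chooseDescTerm m N (i + 1))
      = q * ((m - i) * chooseDescTerm m N i) := by
        rw [← succ_mul_sub_mul_chooseDescTerm_succ]; ring
    _ ≤ p * ((i + 1) * (N - (m - i - 1))) * chooseDescTerm m N i := by
        rw [← mul_assoc]; exact Nat.mul_le_mul_right _ hratio
    _ = (i + 1) * (N - (m - i - 1)) * (p * chooseDescTerm m N i) := by ring

lemma three_mul_chooseDescTerm_succ_le {m n i : ℕ} (hi : 2 ≤ i) (him : i < m)
    (hmn : 3 * m ≤ 2 * n) :
    3 * chooseDescTerm m (n - 1) (i + 1) ≤ 2 * chooseDescTerm m (n - 1) i := by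
  have hx : m ≤ 2 * (n - 1 - (m - i - 1)) := by omega
  set x := n - 1 - (m - i - 1)
  refine mul_chooseDescTerm_succ_le (by omega) ?_
  calc 3 * (m - i) ≤ 3 * (2 * x) := by omega
    _ ≤ (i + 1) * (2 * x) := Nat.mul_le_mul_right _ (by omega)
    _ = 2 * ((i + 1) * x) := by ring

lemma sub_mul_sum_Icc_add_mul_le {a : ℕ → ℕ} {p q k j : ℕ} (hpq : p ≤ q) (hkj : k ≤ j)
    (hratio : ∀ i, k ≤ i → i < j → q * a (i + 1) ≤ p * a i) :
    (q - p) * ∑ i ∈ Finset.Icc k j, a i + p * a j ≤ q * a k := by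
  induction j, hkj using Nat.le_induction with
  | base => rw [Finset.Icc_self, Finset.sum_singleton, ← Nat.add_mul, Nat.sub_add_cancel hpq]
  | succ j hkj ih =>
    have hstep := hratio j hkj j.lt_succ_self
    have ih := ih fun i hki hij => hratio i hki (Nat.lt_succ_of_lt hij)
    rw [Finset.sum_Icc_succ_top (by omega), Nat.mul_add]
    have hq : (q - p) * a (j + 1) + p * a (j + 1) = q * a (j + 1) := by
      rw [← Nat.add_mul, Nat.sub_add_cancel hpq]
    omega

theorem stmt_8 (m n : ℕ) (hm : 3 < m) (hmn : 3 * m ≤ 2 * n) :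
    ∑ i ∈ Finset.Icc 2 m, m.choose i * (n - 1).descFactorial (m - i) <
      m.choose 2 * (n - 1).descFactorial (m - 1) := by
  have hgeom := sub_mul_sum_Icc_add_mul_le (a := chooseDescTerm m (n - 1)) (p := 2) (q := 3)
    (by norm_num) (by omega : 2 ≤ m) fun i hi him => three_mul_chooseDescTerm_succ_le hi him hmn
  rw [chooseDescTerm_self] at hgeom
  have hrhs : m.choose 2 * (n - 1).descFactorial (m - 1) =
      (n - 1 - (m - 2)) * chooseDescTerm m (n - 1) 2 := by
    rw [show m - 1 = m - 2 + 1 by omega, Nat.descFactorial_succ, chooseDescTerm]; ring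
  have hfactor : 3 ≤ n - 1 - (m - 2) := by omega
  calc ∑ i ∈ Finset.Icc 2 m, chooseDescTerm m (n - 1) i
      < 3 * chooseDescTerm m (n - 1) 2 := by omega
    _ ≤ (n - 1 - (m - 2)) * chooseDescTerm m (n - 1) 2 := Nat.mul_le_mul_right _ hfactor
    _ = _ := hrhs.symm
end

section
/- Let a, b be natural numbers with 3 ≤ a and 3a ≤ 2b. Then 3·C(a,3)·(b+1)^{\underline{a-3}} ≤ 4·(b+1)^{\underline{a}} (that is, C(a,3)·(b+1)^{\underline{a-3}} ≤ (4/3)·(b+1)^{\underline{a}}). -/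
/-! The falling factorial splits as `(b+1)^{\underline a} = (b+1)^{\underline{a-3}} · (b+4-a)^{\underline 3}`,
so the claim reduces to `a^{\underline 3} = 6·C(a,3) ≤ 8·(b+4-a)^{\underline 3}`, which holds factor by
factor because `3a ≤ 2b` gives `a - i ≤ 2(b+4-a-i)` for `i < 3`. -/

namespace Nat

theorem descFactorial_le_two_pow_mul_descFactorial {n m k : ℕ} (h : n + k ≤ 2 * m + 1) :
    n.descFactorial k ≤ 2 ^ k * m.descFactorial k := by
  induction k with
  | zero => simp
  | succ k ih =>
    calc n.descFactorial (k + 1) = (n - k) * n.descFactorial k := descFactorial_succ n k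
      _ ≤ (2 * (m - k)) * (2 ^ k * m.descFactorial k) :=
          Nat.mul_le_mul (by omega) (ih (by omega))
      _ = 2 ^ (k + 1) * m.descFactorial (k + 1) := by rw [descFactorial_succ]; ring

theorem three_mul_choose_three_le {a m : ℕ} (h : a + 2 ≤ 2 * m) :
    3 * a.choose 3 ≤ 4 * m.descFactorial 3 := by
  have hdesc : a.descFactorial 3 = 6 * a.choose 3 := descFactorial_eq_factorial_mul_choose a 3
  have := descFactorial_le_two_pow_mul_descFactorial (n := a) (m := m) (k := 3) (by omega)
  omega

end Nat

theorem stmt_12 (a b : ℕ) (ha : 3 ≤ a) (hab : 3 * a ≤ 2 * b) :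
    3 * (a.choose 3 * (b + 1).descFactorial (a - 3)) ≤ 4 * (b + 1).descFactorial a := by
  have hsplit : (b + 1 - (a - 3)).descFactorial 3 * (b + 1).descFactorial (a - 3)
      = (b + 1).descFactorial a := by
    simpa [show a - (a - 3) = 3 by omega] using
      Nat.descFactorial_mul_descFactorial (n := b + 1) (show a - 3 ≤ a by omega)
  rw [← hsplit, ← mul_assoc, ← mul_assoc]
  exact Nat.mul_le_mul_right _ (Nat.three_mul_choose_three_le (by omega))
end

section
/- Let a, b be natural numbers with 3a ≤ 2b and b - a ≥ 7. Then ∑_{l=0}^{a} C(a,l)·(b+1)^{\underline{l}} < (b-a+1)·(b+1)^{\underline{a}}. -/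
/-!
Writing `k = a - l`, the `l`-th summand times `k!` is `a^{\underline{k}} (b+1)^{\underline{l}}`,
while `(b+1)^{\underline{a}} = (b+1-l)^{\underline{k}} (b+1)^{\underline{l}}`. Since `3a ≤ 2b + 2`,
`a^{\underline{k}} ≤ a^k ≤ (2(b+1-a))^k ≤ 2^k (b+1-l)^{\underline{k}}`, so the `l`-th summand is at
most `2^k / k! · (b+1)^{\underline{a}}`. Summing, the left side is at most
`e² (b+1)^{\underline{a}} < 8 (b+1)^{\underline{a}} ≤ (b-a+1)(b+1)^{\underline{a}}`.
-/

open Finset Nat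

theorem Nat.factorial_mul_choose_mul_descFactorial_le {n a l : ℕ} (hl : l ≤ a)
    (ha : a ≤ 2 * (n - a)) :
    (a - l)! * (a.choose l * n.descFactorial l) ≤ 2 ^ (a - l) * n.descFactorial a := by
  set k := a - l with hk
  have hchoose : (a - l)! * a.choose l = a.descFactorial k := by
    rw [← choose_symm hl, descFactorial_eq_factorial_mul_choose]
  have hsplit : n.descFactorial a = (n - l).descFactorial k * n.descFactorial l :=
    (descFactorial_mul_descFactorial hl).symm
  rw [← mul_assoc, hchoose, hsplit, ← mul_assoc]
  gcongr
  calc a.descFactorial k ≤ a ^ k := descFactorial_le_pow a k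
    _ ≤ (2 * (n - a)) ^ k := by gcongr
    _ = 2 ^ k * (n - a) ^ k := mul_pow ..
    _ ≤ 2 ^ k * (n - l + 1 - k) ^ k := by gcongr 2 ^ k * ?_ ^ k; omega
    _ ≤ 2 ^ k * (n - l).descFactorial k := by gcongr; exact pow_sub_le_descFactorial ..

theorem Nat.sum_choose_mul_descFactorial_le_exp_two {n a : ℕ} (ha : a ≤ 2 * (n - a)) :
    ∑ l ∈ range (a + 1), (a.choose l * n.descFactorial l : ℝ) ≤
      Real.exp 2 * n.descFactorial a := by
  have hterm : ∀ l ∈ range (a + 1), (a.choose l * n.descFactorial l : ℝ) ≤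
      (2 : ℝ) ^ (a - l) / (a - l)! * n.descFactorial a := by
    intro l hl
    rw [div_mul_eq_mul_div, le_div_iff₀ (by positivity), mul_comm]
    exact_mod_cast factorial_mul_choose_mul_descFactorial_le (by simpa [Nat.lt_succ_iff] using hl) ha
  calc ∑ l ∈ range (a + 1), (a.choose l * n.descFactorial l : ℝ)
      ≤ ∑ l ∈ range (a + 1), (2 : ℝ) ^ (a - l) / (a - l)! * n.descFactorial a := sum_le_sum hterm
    _ = (∑ k ∈ range (a + 1), (2 : ℝ) ^ k / k !) * n.descFactorial a := by
      rw [← sum_mul, ← sum_range_reflect (fun k ↦ (2 : ℝ) ^ k / k !)]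
      simp only [add_tsub_cancel_right]
    _ ≤ Real.exp 2 * n.descFactorial a := by
      gcongr
      exact Real.sum_le_exp_of_nonneg zero_le_two _

theorem Real.exp_two_lt_eight : Real.exp 2 < 8 := by
  have h : Real.exp 2 = Real.exp 1 ^ 2 := by rw [← Real.exp_nat_mul]; norm_num
  rw [h]
  nlinarith [Real.exp_one_lt_d9, Real.exp_pos 1]

theorem stmt_15 (a b : ℕ) (hab : 3 * a ≤ 2 * b) (h7 : a + 7 ≤ b) :
    ∑ l ∈ Finset.range (a + 1), a.choose l * (b + 1).descFactorial l <
      (b - a + 1) * (b + 1).descFactorial a := by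
  have hD : (0 : ℝ) < (b + 1).descFactorial a := by
    exact_mod_cast descFactorial_pos.mpr (by omega)
  have h8 : (8 : ℝ) ≤ (b - a : ℕ) + 1 := by
    have : 7 ≤ b - a := by omega
    linarith [show (7 : ℝ) ≤ (b - a : ℕ) by exact_mod_cast this]
  rw [← Nat.cast_lt (α := ℝ)]
  push_cast
  calc ∑ l ∈ range (a + 1), (a.choose l * (b + 1).descFactorial l : ℝ)
      ≤ Real.exp 2 * (b + 1).descFactorial a :=
        sum_choose_mul_descFactorial_le_exp_two (by omega)
    _ < 8 * (b + 1).descFactorial a := by gcongr; exact Real.exp_two_lt_eight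
    _ ≤ ((b - a : ℕ) + 1) * (b + 1).descFactorial a := by gcongr
end
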